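/- arXiv:2105.13647 — 2 statements merged into one kernel-verified Lean document; each statement's English description precedes it below -/
import Mathlib

section
/- Let H = Σ_{m=0}^{L−1} α_m u_m v_mᴴ where u_0, …, u_{L−1} are orthonormal in ℂ^N, v_0, …, v_{L−1} are orthonormal in ℂ^M, α_m ∈ ℂ, and |α_0| ≥ |α_m| for all m. Suppose every entry of v_0 has modulus 1/√M, and let a ∈ ℂ^M be a vector every entry of which has modulus 1/√M. Define v ∈ ℂ^M by v_i = M · conj(a_i) · [v_0]_i and Φ = diag(v). Then every diagonal entry of Φ has unit modulus, and ‖H Φ a‖₂² = |α_0|², which equals the largest eigenvalue of Hᴴ H. -/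
/-!
Because the entries of `a` and `v₀` have modulus `1/√M`, the phase profile `Φ` maps `a` to `v₀`,
and orthonormality of the `v_m` gives `H v₀ = α₀ u₀`; hence `‖H Φ a‖² = |α₀|²`. Conversely, by
orthonormality of the `u_m` and Bessel's inequality for the `v_m`,
`‖H x‖² = Σ |α_m|² |⟨v_m, x⟩|² ≤ |α₀|² ‖x‖²`, so every eigenvalue of `Hᴴ H` is at most `|α₀|²`,
while `v₀` is an eigenvector of `Hᴴ H` for exactly this value.
-/

open Matrix Complex ComplexOrder

section

variable {𝕜 ι m n : Type*} [RCLike 𝕜]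

theorem orthonormal_toLp_of_sum_conj_mul [DecidableEq ι] [Fintype n] {u : ι → n → 𝕜}
    (hu : ∀ k l, ∑ i, (starRingEnd 𝕜) (u k i) * u l i = if k = l then 1 else 0) :
    Orthonormal 𝕜 (fun k => WithLp.toLp 2 (u k)) := by
  rw [orthonormal_iff_ite]
  intro k l
  simpa [EuclideanSpace.inner_toLp_toLp, dotProduct, mul_comm] using hu k l

theorem Orthonormal.norm_sum_smul_sq [Fintype ι] {E : Type*} [NormedAddCommGroup E]
    [InnerProductSpace 𝕜 E] {e : ι → E} (he : Orthonormal 𝕜 e) (c : ι → 𝕜) :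
    ‖∑ k, c k • e k‖ ^ 2 = ∑ k, ‖c k‖ ^ 2 := by
  have h := he.inner_sum c c Finset.univ
  simp_rw [inner_self_eq_norm_sq_to_K, RCLike.conj_mul] at h
  exact_mod_cast h

namespace Matrix

theorem sum_smul_vecMulVec_mulVec [Fintype ι] [Fintype n] {R : Type*} [CommSemiring R]
    (α : ι → R) (u : ι → m → R) (w : ι → n → R) (x : n → R) :
    (∑ k, α k • vecMulVec (u k) (w k)) *ᵥ x = ∑ k, (α k * (w k ⬝ᵥ x)) • u k := by
  simp only [sum_mulVec, smul_mulVec, vecMulVec_mulVec, op_smul_eq_smul, smul_smul]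

theorem conjTranspose_sum_smul_vecMulVec [Fintype ι] (α : ι → 𝕜) (u : ι → m → 𝕜)
    (v : ι → n → 𝕜) :
    (∑ k, α k • vecMulVec (u k) (star (v k)))ᴴ
      = ∑ k, star (α k) • vecMulVec (v k) (star (u k)) := by
  simp [conjTranspose_sum, conjTranspose_smul, conjTranspose_vecMulVec]

theorem sum_smul_vecMulVec_mulVec_of_orthonormal [Fintype ι] [DecidableEq ι] [Fintype n]
    (α : ι → 𝕜) (u : ι → m → 𝕜) {v : ι → n → 𝕜}
    (hv : Orthonormal 𝕜 (fun k => WithLp.toLp 2 (v k))) (k : ι) :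
    (∑ l, α l • vecMulVec (u l) (star (v l))) *ᵥ v k = α k • u k := by
  have hvk (l : ι) : star (v l) ⬝ᵥ v k = if l = k then 1 else 0 := by
    rw [dotProduct_comm, ← EuclideanSpace.inner_toLp_toLp, orthonormal_iff_ite.mp hv]
  simp [sum_smul_vecMulVec_mulVec, hvk]

theorem norm_sum_smul_vecMulVec_mulVec_sq_le [Fintype ι] [Fintype m] [Fintype n]
    {u : ι → m → 𝕜} {v : ι → n → 𝕜} {α : ι → 𝕜} {c : ℝ} (hα : ∀ k, ‖α k‖ ≤ c)
    (hu : Orthonormal 𝕜 (fun k => WithLp.toLp 2 (u k)))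
    (hv : Orthonormal 𝕜 (fun k => WithLp.toLp 2 (v k))) (x : n → 𝕜) :
    ‖WithLp.toLp 2 ((∑ k, α k • vecMulVec (u k) (star (v k))) *ᵥ x)‖ ^ 2
      ≤ c ^ 2 * ‖WithLp.toLp 2 x‖ ^ 2 := by
  have hcoeff (k : ι) : star (v k) ⬝ᵥ x = inner 𝕜 (WithLp.toLp 2 (v k)) (WithLp.toLp 2 x) := by
    rw [EuclideanSpace.inner_toLp_toLp, dotProduct_comm]
  simp only [sum_smul_vecMulVec_mulVec, WithLp.toLp_sum, WithLp.toLp_smul, hu.norm_sum_smul_sq,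
    hcoeff, norm_mul, mul_pow]
  calc ∑ k, ‖α k‖ ^ 2 * ‖inner 𝕜 (WithLp.toLp 2 (v k)) (WithLp.toLp 2 x)‖ ^ 2
      ≤ ∑ k, c ^ 2 * ‖inner 𝕜 (WithLp.toLp 2 (v k)) (WithLp.toLp 2 x)‖ ^ 2 := by
        gcongr with k
        exact hα k
    _ ≤ c ^ 2 * ‖WithLp.toLp 2 x‖ ^ 2 := by
        rw [← Finset.mul_sum]
        gcongr
        exact hv.sum_inner_products_le _

theorem re_star_dotProduct_conjTranspose_mul_self_mulVec [Fintype m] [Fintype n]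
    (H : Matrix m n 𝕜) (y : n → 𝕜) :
    RCLike.re (star y ⬝ᵥ (Hᴴ * H) *ᵥ y) = ‖WithLp.toLp 2 (H *ᵥ y)‖ ^ 2 := by
  rw [← mulVec_mulVec, dotProduct_mulVec, ← star_mulVec, dotProduct_comm,
    ← EuclideanSpace.inner_toLp_toLp, inner_self_eq_norm_sq]

theorem IsHermitian.iSup_eigenvalues_eq [Fintype n] [DecidableEq n] {A : Matrix n n 𝕜}
    (hA : A.IsHermitian) {μ : ℝ} {x : n → 𝕜} (hx : x ≠ 0) (hAx : A *ᵥ x = (μ : 𝕜) • x)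
    (hle : ∀ y : n → 𝕜, RCLike.re (star y ⬝ᵥ A *ᵥ y) ≤ μ * ‖WithLp.toLp 2 y‖ ^ 2) :
    ⨆ i, hA.eigenvalues i = μ := by
  have hμ : μ ∈ spectrum ℝ A := by
    refine spectrum.of_algebraMap_mem 𝕜 ?_
    rw [← AlgEquiv.spectrum_eq toLinAlgEquiv', ← Module.End.hasEigenvalue_iff_mem_spectrum]
    exact Module.End.hasEigenvalue_of_hasEigenvector
      ⟨Module.End.mem_eigenspace_iff.mpr (by simpa using hAx), hx⟩
  obtain ⟨i, rfl⟩ := hA.spectrum_real_eq_range_eigenvalues ▸ hμ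
  have : Nonempty n := ⟨i⟩
  refine le_antisymm (ciSup_le fun j => ?_) (le_ciSup (Set.finite_range _).bddAbove i)
  simpa [← hA.eigenvalues_eq j] using hle (hA.eigenvectorBasis j)

end Matrix

end

theorem Complex.natCast_mul_sq_norm_eq_one {M : ℕ} (hM : 0 < M) {z : ℂ} (hz : ‖z‖ = 1 / √M) :
    (M : ℝ) * ‖z‖ ^ 2 = 1 := by
  have : (0 : ℝ) < M := by exact_mod_cast hM
  rw [hz, div_pow, Real.sq_sqrt this.le]
  field_simp

theorem stmt3_general {N M L : ℕ} (hL : 0 < L)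
    (u : Fin L → Fin N → ℂ) (v : Fin L → Fin M → ℂ) (α : Fin L → ℂ)
    (hu : ∀ m m', ∑ i, (starRingEnd ℂ) (u m i) * u m' i = if m = m' then 1 else 0)
    (hv : ∀ m m', ∑ i, (starRingEnd ℂ) (v m i) * v m' i = if m = m' then 1 else 0)
    (hα : ∀ m, ‖α m‖ ≤ ‖α ⟨0, hL⟩‖)
    (hv0 : ∀ i, ‖v ⟨0, hL⟩ i‖ = 1 / Real.sqrt M)
    (a : Fin M → ℂ) (ha : ∀ i, ‖a i‖ = 1 / Real.sqrt M)
    (H : Matrix (Fin N) (Fin M) ℂ)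
    (hH : H = ∑ m, α m • Matrix.vecMulVec (u m) (star (v m)))
    (w : Fin M → ℂ) (hw : ∀ i, w i = (M : ℂ) * (starRingEnd ℂ) (a i) * v ⟨0, hL⟩ i)
    (Φ : Matrix (Fin M) (Fin M) ℂ) (hΦ : Φ = Matrix.diagonal w) :
    (∀ i, ‖Φ i i‖ = 1) ∧
    (∑ i, ‖(H * Φ).mulVec a i‖ ^ 2 = ‖α ⟨0, hL⟩‖ ^ 2) ∧
    (‖α ⟨0, hL⟩‖ ^ 2
      = ⨆ i, (Matrix.posSemidef_conjTranspose_mul_self H).isHermitian.eigenvalues i) := by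
  set z : Fin L := ⟨0, hL⟩
  have hu' := orthonormal_toLp_of_sum_conj_mul hu
  have hv' := orthonormal_toLp_of_sum_conj_mul hv
  have hMa (i : Fin M) : (M : ℝ) * ‖a i‖ ^ 2 = 1 := natCast_mul_sq_norm_eq_one i.pos (ha i)
  have hΦa : Φ *ᵥ a = v z := by
    ext i
    rw [hΦ, mulVec_diagonal, hw, mul_right_comm, mul_assoc _ _ (a i), conj_mul',
      ← ofReal_natCast, ← ofReal_pow, ← ofReal_mul, hMa, ofReal_one, one_mul]
  have hHv : H *ᵥ v z = α z • u z := hH ▸ sum_smul_vecMulVec_mulVec_of_orthonormal α u hv' z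
  have hGram : (Hᴴ * H) *ᵥ v z = ((‖α z‖ ^ 2 : ℝ) : ℂ) • v z := by
    rw [← mulVec_mulVec, hHv, mulVec_smul, hH, conjTranspose_sum_smul_vecMulVec,
      sum_smul_vecMulVec_mulVec_of_orthonormal _ _ hu', smul_smul, mul_comm, RCLike.star_def,
      conj_mul', ofReal_pow]
  refine ⟨fun i => ?_, ?_, ?_⟩
  · rw [hΦ, diagonal_apply_eq, hw, norm_mul, norm_mul, norm_conj, Complex.norm_natCast, hv0 i,
      ← ha i, mul_assoc, ← sq, hMa]
  · rw [← mulVec_mulVec, hΦa, hHv, ← EuclideanSpace.norm_sq_eq (WithLp.toLp 2 _),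
      WithLp.toLp_smul, norm_smul, hu'.norm_eq_one, mul_one]
  · refine (IsHermitian.iSup_eigenvalues_eq _ (fun h => hv'.ne_zero z (by simp [h]))
      hGram fun y => ?_).symm
    rw [re_star_dotProduct_conjTranspose_mul_self_mulVec, hH]
    exact norm_sum_smul_vecMulVec_mulVec_sq_le hα hu' hv' y

/-- **orthonormal counterpart of Proposition 1.**
Let `H = Σ_m α_m u_m v_mᴴ` with `(u_m)` orthonormal in `ℂ^N`, `(v_m)` orthonormal in `ℂ^M`,
and `|α_0| ≥ |α_m|` for all `m`. If all the entries of `v_0` and of `a ∈ ℂ^M` have modulus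
`1/√M`, and `Φ = diag(w)` with `w_i = M conj(a_i) [v_0]_i`, then every diagonal entry of `Φ`
has unit modulus and `‖H Φ a‖₂² = |α_0|²`, which equals the largest eigenvalue of `Hᴴ H`. -/
theorem stmt3 {N M L : ℕ} (hL : 0 < L) (hM : 0 < M)
    (u : Fin L → Fin N → ℂ) (v : Fin L → Fin M → ℂ) (α : Fin L → ℂ)
    (hu : ∀ m m', ∑ i, (starRingEnd ℂ) (u m i) * u m' i = if m = m' then 1 else 0)
    (hv : ∀ m m', ∑ i, (starRingEnd ℂ) (v m i) * v m' i = if m = m' then 1 else 0)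
    (hα : ∀ m, ‖α m‖ ≤ ‖α ⟨0, hL⟩‖)
    (hv0 : ∀ i, ‖v ⟨0, hL⟩ i‖ = 1 / Real.sqrt M)
    (a : Fin M → ℂ) (ha : ∀ i, ‖a i‖ = 1 / Real.sqrt M)
    (H : Matrix (Fin N) (Fin M) ℂ)
    (hH : H = ∑ m, α m • Matrix.vecMulVec (u m) (star (v m)))
    (w : Fin M → ℂ) (hw : ∀ i, w i = (M : ℂ) * (starRingEnd ℂ) (a i) * v ⟨0, hL⟩ i)
    (Φ : Matrix (Fin M) (Fin M) ℂ) (hΦ : Φ = Matrix.diagonal w) :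
    (∀ i, ‖Φ i i‖ = 1) ∧
    (∑ i, ‖(H * Φ).mulVec a i‖ ^ 2 = ‖α ⟨0, hL⟩‖ ^ 2) ∧
    (‖α ⟨0, hL⟩‖ ^ 2
      = ⨆ i, (Matrix.posSemidef_conjTranspose_mul_self H).isHermitian.eigenvalues i) :=
  stmt3_general hL u v α hu hv hα hv0 a ha H hH w hw Φ hΦ
end

section
/- Let B ∈ ℂ^{n×n} be Hermitian positive semidefinite and let W ∈ ℂ^{n×k} satisfy Wᴴ W = I_k. Then det(I_k + Wᴴ B W) ≤ det(I_n + B). -/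
/-!
Write `B = Rᴴ R`. By the Weinstein–Aronszajn identity `det (1 + Wᴴ B W) = det (1 + (R W) (R W)ᴴ)`
and `det (1 + B) = det (1 + R Rᴴ)`. Since `W Wᴴ` is an orthogonal projection, the gap
`R Rᴴ - (R W) (R W)ᴴ = R (1 - W Wᴴ) Rᴴ` is positive semidefinite, so it remains to see that
`det (X + D) ≥ det X` for `X` positive definite and `D = Rᴴ R` positive semidefinite: indeed
`det (X + D) = det X * det (1 + R X⁻¹ Rᴴ)`, and `det (1 + E) = ∏ (1 + λᵢ) ≥ 1` for `E ⪰ 0`.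
-/

open Matrix ComplexOrder
open scoped MatrixOrder

namespace Matrix

variable {𝕜 m n : Type*} [RCLike 𝕜] [Fintype n] [DecidableEq n]

lemma PosSemidef.det_one_add_eq_prod {A : Matrix n n 𝕜} (hA : A.PosSemidef) :
    (1 + A).det = ∏ i, (1 + (hA.1.eigenvalues i : 𝕜)) := by
  set U := hA.1.eigenvectorUnitary
  have hconj : (U : Matrix n n 𝕜) * (1 + diagonal (RCLike.ofReal ∘ hA.1.eigenvalues)) *
      star (U : Matrix n n 𝕜) = 1 + A := by
    rw [Matrix.mul_add, Matrix.add_mul, Matrix.mul_one, Unitary.mul_star_self_of_mem U.2]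
    exact congrArg _ (hA.1.spectral_theorem.trans (Unitary.conjStarAlgAut_apply _ _)).symm
  rw [← hconj, det_mul_comm, ← Matrix.mul_assoc, Unitary.star_mul_self_of_mem U.2, Matrix.one_mul,
    ← diagonal_one, diagonal_add, det_diagonal]
  rfl

lemma PosSemidef.one_le_det_one_add {A : Matrix n n 𝕜} (hA : A.PosSemidef) :
    1 ≤ (1 + A).det := by
  rw [hA.det_one_add_eq_prod]
  calc (1 : 𝕜) = ∏ _i : n, 1 := Finset.prod_const_one.symm
    _ ≤ ∏ i, (1 + (hA.1.eigenvalues i : 𝕜)) :=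
      Finset.prod_le_prod (fun _ _ => zero_le_one) fun i _ =>
        le_add_of_nonneg_right (RCLike.ofReal_nonneg.mpr (hA.eigenvalues_nonneg i))

lemma PosDef.det_le_det_add {X D : Matrix n n 𝕜} (hX : X.PosDef) (hD : D.PosSemidef) :
    X.det ≤ (X + D).det := by
  obtain ⟨R, rfl⟩ := CStarAlgebra.nonneg_iff_eq_star_mul_self.mp hD.nonneg
  have hfactor : X + star R * R = X * (1 + X⁻¹ * star R * R) := by
    rw [Matrix.mul_add, Matrix.mul_one, ← Matrix.mul_assoc, ← Matrix.mul_assoc,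
      mul_nonsing_inv _ ((isUnit_iff_isUnit_det X).mp hX.isUnit), Matrix.one_mul]
  have hE : (R * X⁻¹ * star R).PosSemidef := by
    simpa [star_eq_conjTranspose, Matrix.mul_assoc] using
      hX.inv.posSemidef.mul_mul_conjTranspose_same R
  calc X.det = X.det * 1 := (mul_one _).symm
    _ ≤ X.det * (1 + R * X⁻¹ * star R).det :=
      mul_le_mul_of_nonneg_left hE.one_le_det_one_add hX.det_pos.le
    _ = (X + star R * R).det := by
      rw [hfactor, det_mul, Matrix.mul_assoc, det_one_add_mul_comm, Matrix.mul_assoc]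

lemma posSemidef_one_sub_mul_conjTranspose [Fintype m] [DecidableEq m] {W : Matrix n m 𝕜}
    (hW : Wᴴ * W = 1) :
    (1 - W * Wᴴ).PosSemidef := by
  have hidem : (1 - W * Wᴴ)ᴴ * (1 - W * Wᴴ) = 1 - W * Wᴴ := by
    have : W * Wᴴ * (W * Wᴴ) = W * Wᴴ := by
      rw [Matrix.mul_assoc, ← Matrix.mul_assoc Wᴴ, hW, Matrix.one_mul]
    simp only [conjTranspose_sub, conjTranspose_one, conjTranspose_mul, conjTranspose_conjTranspose,
      Matrix.sub_mul, Matrix.mul_sub, Matrix.one_mul, Matrix.mul_one, this]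
    abel
  exact hidem ▸ posSemidef_conjTranspose_mul_self _

end Matrix

/-- For a Hermitian positive semidefinite `B ∈ ℂ^{n×n}` and a semi-unitary
`W ∈ ℂ^{n×k}` (i.e. `Wᴴ W = I_k`), we have `det(I_k + Wᴴ B W) ≤ det(I_n + B)` (both
determinants are real, and the inequality is in the complex order). -/
theorem stmt8 {n k : ℕ} (B : Matrix (Fin n) (Fin n) ℂ) (hB : B.PosSemidef)
    (W : Matrix (Fin n) (Fin k) ℂ) (hW : Wᴴ * W = 1) :
    ((1 : Matrix (Fin k) (Fin k) ℂ) + Wᴴ * B * W).det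
      ≤ ((1 : Matrix (Fin n) (Fin n) ℂ) + B).det := by
  obtain ⟨R, rfl⟩ := CStarAlgebra.nonneg_iff_eq_star_mul_self.mp hB.nonneg
  have hgap : (R * (1 - W * Wᴴ) * Rᴴ).PosSemidef :=
    (posSemidef_one_sub_mul_conjTranspose hW).mul_mul_conjTranspose_same R
  have hsplit : 1 + R * W * (R * W)ᴴ + R * (1 - W * Wᴴ) * Rᴴ = 1 + R * Rᴴ := by
    simp only [conjTranspose_mul, Matrix.mul_sub, Matrix.sub_mul, Matrix.mul_one, Matrix.mul_assoc]
    abel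
  calc ((1 : Matrix (Fin k) (Fin k) ℂ) + Wᴴ * (star R * R) * W).det
      = (1 + R * W * (R * W)ᴴ).det := by
        rw [show Wᴴ * (star R * R) * W = (R * W)ᴴ * (R * W) by
          simp only [conjTranspose_mul, star_eq_conjTranspose, Matrix.mul_assoc],
          det_one_add_mul_comm]
    _ ≤ (1 + R * W * (R * W)ᴴ + R * (1 - W * Wᴴ) * Rᴴ).det :=
      (PosDef.one.add_posSemidef (posSemidef_self_mul_conjTranspose _)).det_le_det_add hgap
    _ = (1 + star R * R).det := by
      rw [hsplit, det_one_add_mul_comm, star_eq_conjTranspose]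
end
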